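/- Let $0 < y \le 1$, $a = (1-\sqrt{y})^2$, $b = (1+\sqrt{y})^2$. Then $\int_a^b \frac{\rho_{MP,y}(x)}{x - b}\,dx = -\frac{1}{\sqrt{y} + y}$, i.e., $y\int_a^b \frac{x\,\rho_{MP,y}(x)}{x - b}\,dx = y\left(1 - (1+\sqrt{y})^2 \frac{1}{\sqrt{y}+y}\right) = -\sqrt{y}$. -/

import Mathlib

/-!
On `(a, b)` one has `√((b - x)(x - a)) / (x - b) = -(x - a) / √((b - x)(x - a))`, so both
integrals become integrals of nonnegative elementary functions; these are automatically
integrable and are evaluated by the fundamental theorem of calculus. With `Q = (b - x)(x - a)`,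
`arcsin ((2x - a - b)/(b - a))` is a primitive of `1/√Q` and, for `a = p²`, `b = q²`, `p > 0`,
`(pq)⁻¹ arcsin (((a + b)x - 2ab)/((b - a)x))` is one of `1/(x√Q)`. Hence
`∫ (x - a)/√Q = (b - a)π/2` and `∫ (x - a)/(x√Q) = π(1 - p/q)`,
applied with `p = 1 - √y`, `q = 1 + √y`.
-/

open Real Set intervalIntegral

theorem intervalIntegral.integral_eq_sub_of_hasDerivAt_of_nonneg {g g' : ℝ → ℝ} {a b : ℝ}
    (hab : a ≤ b) (hcont : ContinuousOn g (Icc a b))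
    (hderiv : ∀ x ∈ Ioo a b, HasDerivAt g (g' x) x) (hpos : ∀ x ∈ Ioo a b, 0 ≤ g' x) :
    ∫ x in a..b, g' x = g b - g a :=
  integral_eq_sub_of_hasDerivAt_of_le hab hcont hderiv <|
    (intervalIntegrable_iff_integrableOn_Ioc_of_le hab).2 <|
      integrableOn_deriv_of_nonneg hcont hderiv hpos

theorem HasDerivAt.arcsin_of_one_sub_sq_eq {u : ℝ → ℝ} {u' c x : ℝ} (hu : HasDerivAt u u' x)
    (hc : 0 < c) (h : 1 - u x ^ 2 = c ^ 2) :
    HasDerivAt (fun t => arcsin (u t)) (u' / c) x := by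
  have hlt : |u x| < 1 := (sq_lt_one_iff_abs_lt_one _).1 (by nlinarith)
  have hd := (hasDerivAt_arcsin (abs_lt.1 hlt).1.ne' (abs_lt.1 hlt).2.ne).comp x hu
  rwa [h, sqrt_sq hc.le, one_div_mul_eq_div] at hd

section

variable {a b : ℝ}

theorem sqrt_mul_sub_div_sub_right {x : ℝ} (hx : x ∈ Ioo a b) :
    √((b - x) * (x - a)) / (x - b) = -((x - a) / √((b - x) * (x - a))) := by
  have hQ : 0 < (b - x) * (x - a) := mul_pos (by linarith [hx.2]) (by linarith [hx.1])
  have hxb : x - b ≠ 0 := by linarith [hx.2]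
  rw [← neg_div, div_eq_div_iff hxb (sqrt_pos.2 hQ).ne', mul_self_sqrt hQ.le]
  ring

theorem hasDerivAt_arcsin_affine {x : ℝ} (hx : x ∈ Ioo a b) :
    HasDerivAt (fun t => arcsin ((2 * t - a - b) / (b - a)))
      (1 / √((b - x) * (x - a))) x := by
  obtain ⟨hax, hxb⟩ := hx
  have hQ : 0 < (b - x) * (x - a) := mul_pos (by linarith) (by linarith)
  have hba : 0 < b - a := by linarith
  have hlin : HasDerivAt (fun t => (2 * t - a - b) / (b - a)) (2 / (b - a)) x := by
    simpa using ((((hasDerivAt_id x).const_mul 2).sub_const a).sub_const b).div_const (b - a)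
  convert hlin.arcsin_of_one_sub_sq_eq (c := 2 * √((b - x) * (x - a)) / (b - a))
    (by positivity) ?_ using 1
  · field_simp
  · simp only [div_pow, mul_pow, sq_sqrt hQ.le]
    field_simp
    ring

theorem hasDerivAt_sqrt_mul_sub {x : ℝ} (hx : x ∈ Ioo a b) :
    HasDerivAt (fun t => √((b - t) * (t - a)))
      ((a + b - 2 * x) / (2 * √((b - x) * (x - a)))) x := by
  have hQ : 0 < (b - x) * (x - a) := mul_pos (by linarith [hx.2]) (by linarith [hx.1])
  have hv : HasDerivAt (fun t => (b - t) * (t - a)) (a + b - 2 * x) x := by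
    refine (((hasDerivAt_id' x).const_sub b).mul
      ((hasDerivAt_id' x).sub_const a)).congr_deriv ?_
    ring
  convert hv.sqrt hQ.ne' using 1

theorem arcsin_affine_right_sub_left (hab : a < b) :
    arcsin ((2 * b - a - b) / (b - a)) - arcsin ((2 * a - a - b) / (b - a)) = π := by
  have hba : b - a ≠ 0 := by linarith
  rw [show 2 * b - a - b = b - a by ring, show 2 * a - a - b = -(b - a) by ring, neg_div,
    div_self hba, arcsin_one, arcsin_neg_one]
  ring

theorem integral_one_div_sqrt_mul_sub (hab : a < b) :
    ∫ x in a..b, 1 / √((b - x) * (x - a)) = π := by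
  rw [integral_eq_sub_of_hasDerivAt_of_nonneg hab.le (Continuous.continuousOn (by fun_prop))
    (fun x hx => hasDerivAt_arcsin_affine hx) (fun x _ => by positivity)]
  exact arcsin_affine_right_sub_left hab

theorem integral_sub_div_sqrt_mul_sub (hab : a < b) :
    ∫ x in a..b, (x - a) / √((b - x) * (x - a)) = (b - a) * π / 2 := by
  have hderiv : ∀ x ∈ Ioo a b, HasDerivAt
      (fun t => (b - a) / 2 * arcsin ((2 * t - a - b) / (b - a)) - √((b - t) * (t - a)))
      ((x - a) / √((b - x) * (x - a))) x := by
    intro x hx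
    have hQ : 0 < √((b - x) * (x - a)) :=
      sqrt_pos.2 (mul_pos (by linarith [hx.2]) (by linarith [hx.1]))
    refine (((hasDerivAt_arcsin_affine hx).const_mul _).sub
      (hasDerivAt_sqrt_mul_sub hx)).congr_deriv ?_
    field_simp
    ring
  rw [integral_eq_sub_of_hasDerivAt_of_nonneg hab.le (Continuous.continuousOn (by fun_prop))
    hderiv (fun x hx => div_nonneg (by linarith [hx.1]) (sqrt_nonneg _)),
    ← arcsin_affine_right_sub_left hab]
  simp
  ring

end

theorem hasDerivAt_arcsin_moebius {p q x : ℝ} (hp : 0 < p) (hpq : p < q)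
    (hx : x ∈ Ioo (p ^ 2) (q ^ 2)) :
    HasDerivAt
      (fun t => arcsin (((p ^ 2 + q ^ 2) * t - 2 * p ^ 2 * q ^ 2) / ((q ^ 2 - p ^ 2) * t)))
      (p * q / (x * √((q ^ 2 - x) * (x - p ^ 2)))) x := by
  obtain ⟨hpx, hxq⟩ := hx
  have hx0 : 0 < x := by nlinarith
  have hQ : 0 < (q ^ 2 - x) * (x - p ^ 2) := mul_pos (by linarith) (by linarith)
  have hqp : 0 < q ^ 2 - p ^ 2 := by nlinarith
  have hq : 0 < q := hp.trans hpq
  have hw : HasDerivAt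
      (fun t => ((p ^ 2 + q ^ 2) * t - 2 * p ^ 2 * q ^ 2) / ((q ^ 2 - p ^ 2) * t))
      (2 * p ^ 2 * q ^ 2 / ((q ^ 2 - p ^ 2) * x ^ 2)) x := by
    refine ((((hasDerivAt_id' x).const_mul (p ^ 2 + q ^ 2)).sub_const (2 * p ^ 2 * q ^ 2)).div
      ((hasDerivAt_id' x).const_mul (q ^ 2 - p ^ 2)) (by positivity)).congr_deriv ?_
    field_simp
    ring
  convert hw.arcsin_of_one_sub_sq_eq
    (c := 2 * p * q * √((q ^ 2 - x) * (x - p ^ 2)) / ((q ^ 2 - p ^ 2) * x)) (by positivity) ?_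
    using 1
  · field_simp
  · simp only [div_pow, mul_pow, sq_sqrt hQ.le]
    field_simp
    ring

theorem integral_sub_div_mul_sqrt_mul_sub {p q : ℝ} (hp : 0 ≤ p) (hpq : p < q) :
    ∫ x in p ^ 2..q ^ 2, (x - p ^ 2) / (x * √((q ^ 2 - x) * (x - p ^ 2))) =
      π * (1 - p / q) := by
  have hsq : p ^ 2 < q ^ 2 := by nlinarith
  rcases hp.eq_or_lt with rfl | hp
  · rw [zero_div, sub_zero, mul_one, ← integral_one_div_sqrt_mul_sub hsq]
    refine integral_congr_Ioo_of_le hsq.le fun x hx => ?_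
    have hx : x ≠ 0 := by simp at hx; linarith [hx.1]
    simp [div_mul_cancel_left₀ hx]
  have hderiv : ∀ x ∈ Ioo (p ^ 2) (q ^ 2), HasDerivAt
      (fun t => arcsin ((2 * t - p ^ 2 - q ^ 2) / (q ^ 2 - p ^ 2)) -
        p / q * arcsin (((p ^ 2 + q ^ 2) * t - 2 * p ^ 2 * q ^ 2) / ((q ^ 2 - p ^ 2) * t)))
      ((x - p ^ 2) / (x * √((q ^ 2 - x) * (x - p ^ 2)))) x := by
    intro x hx
    have hx0 : 0 < x := by nlinarith [hx.1]
    have hQ : 0 < √((q ^ 2 - x) * (x - p ^ 2)) :=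
      sqrt_pos.2 (mul_pos (by linarith [hx.2]) (by linarith [hx.1]))
    have hq : q ≠ 0 := by linarith
    refine ((hasDerivAt_arcsin_affine hx).sub
      ((hasDerivAt_arcsin_moebius hp hpq hx).const_mul _)).congr_deriv ?_
    field_simp
  have hcont : ContinuousOn (fun t => arcsin ((2 * t - p ^ 2 - q ^ 2) / (q ^ 2 - p ^ 2)) -
        p / q * arcsin (((p ^ 2 + q ^ 2) * t - 2 * p ^ 2 * q ^ 2) / ((q ^ 2 - p ^ 2) * t)))
      (Icc (p ^ 2) (q ^ 2)) := by
    refine ContinuousOn.sub (by fun_prop) (continuousOn_const.mul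
      (continuous_arcsin.comp_continuousOn (ContinuousOn.div (by fun_prop) (by fun_prop) ?_)))
    intro t ht
    have : 0 < t := by nlinarith [ht.1]
    positivity
  rw [integral_eq_sub_of_hasDerivAt_of_nonneg hsq.le hcont hderiv fun x hx =>
    div_nonneg (by linarith [hx.1]) (mul_nonneg (by nlinarith [hx.1]) (sqrt_nonneg _))]
  have hqq : (q ^ 2 - p ^ 2) * q ^ 2 ≠ 0 := mul_ne_zero (by linarith) (by nlinarith)
  have hpp : (q ^ 2 - p ^ 2) * p ^ 2 ≠ 0 := mul_ne_zero (by linarith) (by positivity)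
  rw [show (p ^ 2 + q ^ 2) * q ^ 2 - 2 * p ^ 2 * q ^ 2 = (q ^ 2 - p ^ 2) * q ^ 2 by ring,
    show (p ^ 2 + q ^ 2) * p ^ 2 - 2 * p ^ 2 * q ^ 2 = -((q ^ 2 - p ^ 2) * p ^ 2) by ring,
    neg_div, div_self hqq, div_self hpp, arcsin_one, arcsin_neg_one,
    ← arcsin_affine_right_sub_left hsq]
  ring

/-- Integral of the Marchenko–Pastur density against `(x - b)⁻¹` at the right edge `b`:
`∫ ρ(x)/(x-b) dx = -1/(√y + y)`, and consequently
`y ∫ x ρ(x)/(x-b) dx = y (1 - (1+√y)² /(√y+y)) = -√y`. -/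
theorem marchenko_pastur_integral_right_edge
    (y : ℝ) (hy0 : 0 < y) (hy1 : y ≤ 1) :
    (∫ x in ((1 - Real.sqrt y) ^ 2)..((1 + Real.sqrt y) ^ 2),
        ((1 / (2 * Real.pi * x * y)) *
            Real.sqrt (((1 + Real.sqrt y) ^ 2 - x) * (x - (1 - Real.sqrt y) ^ 2))) /
          (x - (1 + Real.sqrt y) ^ 2) = -(1 / (Real.sqrt y + y))) ∧
    (y * ∫ x in ((1 - Real.sqrt y) ^ 2)..((1 + Real.sqrt y) ^ 2),
        (x * ((1 / (2 * Real.pi * x * y)) *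
            Real.sqrt (((1 + Real.sqrt y) ^ 2 - x) * (x - (1 - Real.sqrt y) ^ 2)))) /
          (x - (1 + Real.sqrt y) ^ 2) = -Real.sqrt y) ∧
    y * (1 - (1 + Real.sqrt y) ^ 2 * (1 / (Real.sqrt y + y))) = -Real.sqrt y := by
  obtain ⟨s, hs, hsy, hs1, rfl⟩ : ∃ s, 0 < s ∧ √(s ^ 2) = s ∧ s ≤ 1 ∧ y = s ^ 2 :=
    ⟨√y, sqrt_pos.2 hy0, sqrt_sq (sqrt_nonneg y), sqrt_le_one.2 hy1, (sq_sqrt hy0.le).symm⟩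
  rw [hsy]
  have hpq : 1 - s < 1 + s := by linarith
  have hab : (1 - s) ^ 2 < (1 + s) ^ 2 := by nlinarith
  have hpos : ∀ x ∈ Ioo ((1 - s) ^ 2) ((1 + s) ^ 2),
      0 < x ∧ 0 < √(((1 + s) ^ 2 - x) * (x - (1 - s) ^ 2)) := fun x hx =>
    ⟨by nlinarith [hx.1], sqrt_pos.2 (mul_pos (by linarith [hx.2]) (by linarith [hx.1]))⟩
  refine ⟨?_, ?_, by field_simp; ring⟩
  · calc _ = ∫ x in (1 - s) ^ 2..(1 + s) ^ 2, -(1 / (2 * π * s ^ 2)) *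
          ((x - (1 - s) ^ 2) / (x * √(((1 + s) ^ 2 - x) * (x - (1 - s) ^ 2)))) := by
          refine integral_congr_Ioo_of_le hab.le fun x hx => ?_
          obtain ⟨hx0, hQ⟩ := hpos x hx
          rw [mul_div_assoc, sqrt_mul_sub_div_sub_right hx]
          field_simp
      _ = _ := by
          rw [integral_const_mul, integral_sub_div_mul_sqrt_mul_sub (by linarith) hpq]
          field_simp
          ring
  · calc _ = s ^ 2 * ∫ x in (1 - s) ^ 2..(1 + s) ^ 2, -(1 / (2 * π * s ^ 2)) *
          ((x - (1 - s) ^ 2) / √(((1 + s) ^ 2 - x) * (x - (1 - s) ^ 2))) := by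
          congr 1
          refine integral_congr_Ioo_of_le hab.le fun x hx => ?_
          obtain ⟨hx0, hQ⟩ := hpos x hx
          rw [mul_div_assoc, mul_div_assoc, sqrt_mul_sub_div_sub_right hx]
          field_simp
      _ = _ := by
          rw [integral_const_mul, integral_sub_div_sqrt_mul_sub hab]
          field_simp
          ring
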